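/- Let (a_k)_{k≥1} ⊂ D be a sequence with |a_k| ≤ |a_{k+1}|, satisfying the Newman–Carleson condition and the Stoltz condition |1 - a_k| ≤ λ(1 - |a_k|) for all k. Then Ω(a) := sup_{y ≥ 0} ∑_{k≥1} (1 - |a_k|) y / ((1 - |a_k|)² + y²) < ∞. -/

import Mathlib

/-!
Write `t k = 1 - ‖a k‖`. Bounding the Newman–Carleson product by a single factor gives the
separation `δ t_i ≤ |a_i - a_j|`, and by the Stoltz condition `a_k, …, a_{k+N}` lie in the disc
of radius `λ t_k` about `1`. If `t_{k+N} > t_k / 2`, these `N + 1` points would be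
`δ t_k / 2`-separated, which a volume count forbids once `N ≥ ((4λ + δ) / δ)²`. Hence `t` halves
every `N` steps. For `y > 0` let `K` be the first index with `t_K < y`: the terms
`t y / (t² + y²) ≤ min (t / y) (y / t)` decay like `2 ^ (-⌊d / N⌋)` in the distance `d` from `K`
on both sides, so the sum is at most `2 ∑_d 2 ^ (-⌊d / N⌋)`, whatever `y` is.
-/

open Finset Metric MeasureTheory Module ComplexConjugate
open scoped ENNReal

theorem Real.tprod_le_of_nonneg_of_le_one {ι : Type*} {f : ι → ℝ} (h0 : ∀ i, 0 ≤ f i)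
    (h1 : ∀ i, f i ≤ 1) (i : ι) : ∏' j, f j ≤ f i := by
  have hbdd : BddBelow (Set.range fun s : Finset ι => ∏ j ∈ s, f j) :=
    ⟨0, by rintro _ ⟨s, rfl⟩; exact prod_nonneg fun j _ => h0 j⟩
  have hprod : HasProd f (⨅ s : Finset ι, ∏ j ∈ s, f j) :=
    tendsto_atTop_ciInf (prod_anti_set_of_le_one h0 h1) hbdd
  rw [hprod.tprod_eq]
  simpa using ciInf_le hbdd {i}

namespace Complex

theorem norm_sub_le_norm_one_sub_conj_mul {z w : ℂ} (hz : ‖z‖ ≤ 1) (hw : ‖w‖ ≤ 1) :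
    ‖z - w‖ ≤ ‖1 - conj z * w‖ := by
  have key : normSq (1 - conj z * w) - normSq (z - w) = (1 - normSq z) * (1 - normSq w) := by
    simp only [normSq_apply, sub_re, sub_im, mul_re, mul_im, one_re, one_im, conj_re, conj_im]
    ring
  have hz2 : normSq z ≤ 1 := by rw [← Complex.sq_norm]; nlinarith [norm_nonneg z]
  have hw2 : normSq w ≤ 1 := by rw [← Complex.sq_norm]; nlinarith [norm_nonneg w]
  rw [norm_def, norm_def]
  exact Real.sqrt_le_sqrt (by nlinarith)

theorem one_sub_norm_le_norm_one_sub_conj_mul (z : ℂ) {w : ℂ} (hw : ‖w‖ ≤ 1) :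
    1 - ‖z‖ ≤ ‖1 - conj z * w‖ :=
  calc 1 - ‖z‖ ≤ 1 - ‖conj z * w‖ := by
        rw [norm_mul, norm_conj]
        nlinarith [norm_nonneg z]
    _ ≤ ‖1 - conj z * w‖ := by simpa using norm_sub_norm_le (1 : ℂ) (conj z * w)

theorem norm_div_one_sub_conj_mul_le_one {z w : ℂ} (hz : ‖z‖ ≤ 1) (hw : ‖w‖ ≤ 1) :
    ‖(z - w) / (1 - conj z * w)‖ ≤ 1 := by
  rw [norm_div]
  exact div_le_one_of_le₀ (norm_sub_le_norm_one_sub_conj_mul hz hw) (norm_nonneg _)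

theorem norm_div_one_sub_conj_mul_mul_le (z : ℂ) {w : ℂ} (hw : ‖w‖ ≤ 1) :
    ‖(z - w) / (1 - conj z * w)‖ * (1 - ‖z‖) ≤ ‖z - w‖ := by
  have hD := one_sub_norm_le_norm_one_sub_conj_mul z hw
  rw [norm_div]
  rcases (norm_nonneg (1 - conj z * w)).eq_or_lt with hD0 | hD0
  · simp [← hD0]
  calc ‖z - w‖ / ‖1 - conj z * w‖ * (1 - ‖z‖)
      ≤ ‖z - w‖ / ‖1 - conj z * w‖ * ‖1 - conj z * w‖ := by gcongr
    _ = ‖z - w‖ := div_mul_cancel₀ _ hD0.ne'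

end Complex

theorem Finset.card_le_of_dist_le_of_separated {E ι : Type*} [NormedAddCommGroup E]
    [NormedSpace ℝ E] [FiniteDimensional ℝ E] (s : Finset ι) (f : ι → E) (x : E) {r ε : ℝ}
    (hr : 0 ≤ r) (hε : 0 < ε) (hball : ∀ i ∈ s, dist (f i) x ≤ r)
    (hsep : ∀ i ∈ s, ∀ j ∈ s, i ≠ j → ε ≤ dist (f i) (f j)) :
    (#s : ℝ) ≤ ((2 * r + ε) / ε) ^ finrank ℝ E := by
  borelize E
  set μ : Measure E := Measure.addHaar
  set d := finrank ℝ E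
  have hdisj : (s : Set ι).PairwiseDisjoint fun i => ball (f i) (ε / 2) :=
    fun i hi j hj hij => ball_disjoint_ball (by linarith [hsep i hi j hj hij])
  have hsub : ⋃ i ∈ s, ball (f i) (ε / 2) ⊆ ball x (r + ε / 2) :=
    Set.iUnion₂_subset fun i hi => ball_subset_ball' (by linarith [hball i hi])
  have hvol : (#s : ℝ≥0∞) * ENNReal.ofReal ((ε / 2) ^ d) * μ (ball 0 1)
      ≤ ENNReal.ofReal ((r + ε / 2) ^ d) * μ (ball 0 1) :=
    calc (#s : ℝ≥0∞) * ENNReal.ofReal ((ε / 2) ^ d) * μ (ball 0 1)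
        = μ (⋃ i ∈ s, ball (f i) (ε / 2)) := by
          rw [measure_biUnion_finset hdisj fun _ _ => measurableSet_ball]
          simp [μ.addHaar_ball_of_pos _ (half_pos hε), mul_assoc, d]
      _ ≤ μ (ball x (r + ε / 2)) := measure_mono hsub
      _ = ENNReal.ofReal ((r + ε / 2) ^ d) * μ (ball 0 1) :=
          μ.addHaar_ball_of_pos _ (by positivity)
  have hvol' := (ENNReal.mul_le_mul_iff_left (measure_ball_pos μ 0 one_pos).ne'
    measure_ball_lt_top.ne).1 hvol
  rw [← ENNReal.ofReal_natCast, ← ENNReal.ofReal_mul (by positivity),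
    ENNReal.ofReal_le_ofReal_iff (by positivity)] at hvol'
  calc (#s : ℝ) = #s * (ε / 2) ^ d / (ε / 2) ^ d := by field_simp
    _ ≤ (r + ε / 2) ^ d / (ε / 2) ^ d := by gcongr
    _ = ((2 * r + ε) / ε) ^ d := by rw [← div_pow]; congr 1; field_simp

theorem mul_one_sub_norm_le_dist_of_le_tprod {ι : Type*} {a : ι → ℂ} (ha : ∀ k, ‖a k‖ ≤ 1)
    {δ : ℝ} (hδ : ∀ n, δ ≤ ∏' k : {k : ι // k ≠ n}, ‖(a k - a n) / (1 - conj (a k) * a n)‖)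
    {i j : ι} (hij : i ≠ j) : δ * (1 - ‖a i‖) ≤ dist (a i) (a j) := by
  have hρ : δ ≤ ‖(a i - a j) / (1 - conj (a i) * a j)‖ :=
    (hδ j).trans <| Real.tprod_le_of_nonneg_of_le_one
      (f := fun k : {k : ι // k ≠ j} => ‖(a k - a j) / (1 - conj (a k) * a j)‖)
      (fun _ => norm_nonneg _) (fun k => Complex.norm_div_one_sub_conj_mul_le_one (ha k) (ha j))
      ⟨i, hij⟩
  calc δ * (1 - ‖a i‖) ≤ ‖(a i - a j) / (1 - conj (a i) * a j)‖ * (1 - ‖a i‖) := by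
        gcongr; linarith [ha i]
    _ ≤ dist (a i) (a j) := by
        rw [dist_eq_norm]; exact Complex.norm_div_one_sub_conj_mul_mul_le _ (ha j)

theorem le_half_of_dist_le_of_separated {E : Type*} [NormedAddCommGroup E] [NormedSpace ℝ E]
    [FiniteDimensional ℝ E] {p : ℕ → E} {t : ℕ → ℝ} {x : E} {lam δ : ℝ} (hδ : 0 < δ)
    (ht : Antitone t) (htpos : ∀ k, 0 < t k) (hball : ∀ k, dist (p k) x ≤ lam * t k)
    (hsep : ∀ i j, i ≠ j → δ * t i ≤ dist (p i) (p j)) {N : ℕ}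
    (hN : ((4 * lam + δ) / δ) ^ finrank ℝ E ≤ N) (k : ℕ) : t (k + N) ≤ t k / 2 := by
  by_contra! hlarge
  have hlam : 0 ≤ lam := nonneg_of_mul_nonneg_left (dist_nonneg.trans (hball 0)) (htpos 0)
  have hcard := (Icc k (k + N)).card_le_of_dist_le_of_separated p x
    (mul_nonneg hlam (htpos k).le) (by have := htpos k; positivity : 0 < δ * (t k / 2))
    (fun i hi => (hball i).trans (by gcongr; exact ht (mem_Icc.1 hi).1))
    (fun i hi j _ hij => calc
      δ * (t k / 2) ≤ δ * t i := by gcongr; exact hlarge.le.trans (ht (mem_Icc.1 hi).2)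
      _ ≤ dist (p i) (p j) := hsep i j hij)
  have hratio : (2 * (lam * t k) + δ * (t k / 2)) / (δ * (t k / 2)) = (4 * lam + δ) / δ := by
    field_simp [(htpos k).ne']
    ring
  rw [hratio, Nat.card_Icc, show k + N + 1 - k = N + 1 by omega] at hcard
  push_cast at hcard
  linarith

theorem le_div_two_pow_div_of_le_half {t : ℕ → ℝ} (ht : Antitone t) {N : ℕ}
    (hN : ∀ k, t (k + N) ≤ t k / 2) (k d : ℕ) : t (k + d) ≤ t k / 2 ^ (d / N) := by
  have hgeom : ∀ j, t (k + N * j) ≤ t k / 2 ^ j := by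
    intro j
    induction j with
    | zero => simp
    | succ j ih =>
      calc t (k + N * (j + 1)) = t (k + N * j + N) := by rw [mul_add_one, add_assoc]
        _ ≤ t (k + N * j) / 2 := hN _
        _ ≤ t k / 2 ^ j / 2 := by gcongr
        _ = t k / 2 ^ (j + 1) := by rw [pow_succ, div_div]
  exact (ht (by gcongr; exact Nat.mul_div_le d N)).trans (hgeom _)

theorem summable_half_pow_div {N : ℕ} (hN : 0 < N) :
    Summable fun d : ℕ => (1 / 2 : ℝ) ^ (d / N) := by
  have := NeZero.of_pos hN
  -- `d ↦ (d / N, d % N)` turns the series into `N` copies of the geometric series.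
  have hprod : Summable fun q : ℕ × Fin N => (1 / 2 : ℝ) ^ q.1 :=
    (summable_prod_of_nonneg fun _ => by positivity).2
      ⟨fun _ => .of_finite, by simpa using summable_geometric_two.mul_left (N : ℝ)⟩
  exact (Nat.divModEquiv N).summable_iff.2 hprod

theorem mul_div_sq_add_sq_le_div {s t : ℝ} (hs : 0 ≤ s) (ht : 0 < t) :
    s * t / (s ^ 2 + t ^ 2) ≤ s / t :=
  calc s * t / (s ^ 2 + t ^ 2) ≤ s * t / t ^ 2 := by gcongr; nlinarith
    _ = s / t := by field_simp

theorem tsum_mul_div_sq_add_sq_le {t : ℕ → ℝ} (ht : Antitone t) (htpos : ∀ k, 0 < t k)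
    {N : ℕ} (hN0 : 0 < N) (hN : ∀ k, t (k + N) ≤ t k / 2) {y : ℝ} (hy : 0 ≤ y) :
    ∑' k, t k * y / (t k ^ 2 + y ^ 2) ≤ 2 * ∑' d, (1 / 2 : ℝ) ^ (d / N) := by
  set w : ℕ → ℝ := fun d => (1 / 2 : ℝ) ^ (d / N)
  have hw : Summable w := summable_half_pow_div hN0
  have hw0 : ∀ d, 0 ≤ w d := fun d => by positivity
  rcases hy.eq_or_lt with rfl | hy
  · simpa using tsum_nonneg hw0
  set g : ℕ → ℝ := fun k => t k * y / (t k ^ 2 + y ^ 2)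
  have hg0 : ∀ k, 0 ≤ g k := fun k => by have := htpos k; positivity
  have hdecay := le_div_two_pow_div_of_le_half ht hN
  have hex : ∃ k, t k < y := by
    obtain ⟨j, hj⟩ := pow_unbounded_of_one_lt (t 0 / y) one_lt_two
    have hj' := hdecay 0 (N * j)
    rw [zero_add, Nat.mul_div_cancel_left j hN0] at hj'
    refine ⟨N * j, hj'.trans_lt ?_⟩
    rwa [div_lt_iff₀ (by positivity), mul_comm, ← div_lt_iff₀ hy]
  classical
  set K := Nat.find hex
  have hlate : ∀ d, g (d + K) ≤ w d := fun d =>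
    calc g (d + K) ≤ t (K + d) / y := by
          rw [add_comm]; exact mul_div_sq_add_sq_le_div (htpos _).le hy
      _ ≤ y / 2 ^ (d / N) / y := by
          gcongr
          exact (hdecay K d).trans (by gcongr; exact (Nat.find_spec hex).le)
      _ = w d := by simp only [w, one_div, inv_pow]; field_simp
  have hearly : ∀ k < K, g k ≤ w (K - 1 - k) := fun k hk =>
    calc g k ≤ y / t k := by
          rw [show g k = y * t k / (y ^ 2 + t k ^ 2) by simp only [g]; ring_nf]
          exact mul_div_sq_add_sq_le_div hy.le (htpos k)
      _ ≤ y / (y * 2 ^ ((K - 1 - k) / N)) := by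
          gcongr
          rw [← le_div_iff₀ (by positivity)]
          calc y ≤ t (K - 1) := not_lt.1 (Nat.find_min hex (by omega))
            _ = t (k + (K - 1 - k)) := by congr 1; omega
            _ ≤ _ := hdecay k _
      _ = w (K - 1 - k) := by simp only [w, one_div, inv_pow]; field_simp
  have hgK : Summable fun d => g (d + K) := hw.of_nonneg_of_le (fun d => hg0 _) hlate
  have hg : Summable g := (summable_nat_add_iff K).1 hgK
  calc ∑' k, g k = ∑ k ∈ range K, g k + ∑' d, g (d + K) := (hg.sum_add_tsum_nat_add K).symm
    _ ≤ ∑ k ∈ range K, w (K - 1 - k) + ∑' d, w d :=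
        add_le_add (sum_le_sum fun k hk => hearly k (mem_range.1 hk)) (hgK.tsum_le_tsum hlate hw)
    _ = ∑ d ∈ range K, w d + ∑' d, w d := by rw [sum_range_reflect w K]
    _ ≤ 2 * ∑' d, w d := by linarith [hw.sum_le_tsum (range K) fun d _ => hw0 d]

theorem stmt_6 (a : ℕ → ℂ) (lam : ℝ)
    (ha : ∀ k, ‖a k‖ < 1)
    (hmono : ∀ k, ‖a k‖ ≤ ‖a (k + 1)‖)
    (hNC : ∃ δ : ℝ, 0 < δ ∧ ∀ n, δ ≤ ∏' k : {k : ℕ // k ≠ n},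
      ‖(a k - a n) / (1 - (starRingEnd ℂ (a k)) * a n)‖)
    (hS : ∀ k, ‖1 - a k‖ ≤ lam * (1 - ‖a k‖)) :
    ∃ C : ℝ, ∀ y : ℝ, 0 ≤ y →
      ∑' k : ℕ, (1 - ‖a k‖) * y / ((1 - ‖a k‖)^2 + y^2) ≤ C := by
  obtain ⟨δ, hδ, hNC⟩ := hNC
  set t : ℕ → ℝ := fun k => 1 - ‖a k‖
  have ht : Antitone t := antitone_nat_of_succ_le fun k => sub_le_sub_left (hmono k) 1
  have htpos : ∀ k, 0 < t k := fun k => sub_pos.2 (ha k)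
  have hball : ∀ k, dist (a k) 1 ≤ lam * t k := fun k => by
    rw [dist_comm, dist_eq_norm]; exact hS k
  have hsep : ∀ i j, i ≠ j → δ * t i ≤ dist (a i) (a j) := fun i j hij =>
    mul_one_sub_norm_le_dist_of_le_tprod (fun k => (ha k).le) hNC hij
  obtain ⟨N, hN⟩ := exists_nat_ge (((4 * lam + δ) / δ) ^ finrank ℝ ℂ)
  have hhalf : ∀ k, t (k + (N + 1)) ≤ t k / 2 :=
    le_half_of_dist_le_of_separated hδ ht htpos hball hsep (by push_cast; linarith)
  exact ⟨_, fun y hy => tsum_mul_div_sq_add_sq_le ht htpos N.succ_pos hhalf hy⟩
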